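/- arXiv:math/0109216 — 5 statements merged into one kernel-verified Lean document; each statement's English description precedes it below -/
import Mathlib

section
/- Let G be a real symmetric positive definite 2×2 matrix with det G = 1, F = √G its positive square root, and let v₁, v₂ ∈ ℝ² satisfy v₂ = J G v₁ where J = ((0,-1),(1,0)). Then: (a) ⟨F v₁, F v₂⟩ = 0; (b) |F v₁|² = |F v₂|²; and (c) v₁ = −J G v₂. -/
/-!
With `J` the rotation by a right angle, every `2 × 2` matrix satisfies `Aᵀ J A = (det A) J`;
for symmetric `G` with `det G = 1` this reads `G J G = J`. Since `Fᵀ F = G`, the pairing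
`(F a) ⬝ (F b)` equals `a ⬝ G b`, and the three claims become `v ⬝ J v = 0`, `Jᵀ J = 1`
and `J J = -1`.
-/

open scoped Matrix

noncomputable def Matrix.PosSemidef.sqrt {n : Type*} [Fintype n] [DecidableEq n]
    {A : Matrix n n ℝ} (hA : A.PosSemidef) : Matrix n n ℝ :=
  hA.1.eigenvectorUnitary.1 * Matrix.diagonal ((↑) ∘ (Real.sqrt ·) ∘ hA.1.eigenvalues) *
    (star hA.1.eigenvectorUnitary : Matrix n n ℝ)

namespace Matrix

section Sqrt

variable {n : Type*} [Fintype n] [DecidableEq n] {A : Matrix n n ℝ}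

theorem PosSemidef.transpose_sqrt (hA : A.PosSemidef) : hA.sqrtᵀ = hA.sqrt := by
  rw [← conjTranspose_eq_transpose_of_trivial]
  exact isHermitian_mul_mul_conjTranspose _
    (isHermitian_diagonal_of_self_adjoint _ (by ext i; simp))

theorem PosSemidef.sqrt_mul_self (hA : A.PosSemidef) : hA.sqrt * hA.sqrt = A := by
  have hU : (star hA.1.eigenvectorUnitary : Matrix n n ℝ) * hA.1.eigenvectorUnitary.1 = 1 :=
    mem_unitaryGroup_iff'.mp hA.1.eigenvectorUnitary.2
  conv_rhs => rw [hA.1.spectral_theorem, Unitary.conjStarAlgAut_apply]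
  simp only [PosSemidef.sqrt, Matrix.mul_assoc]
  rw [← Matrix.mul_assoc (star _) _ (diagonal _ * _), hU, Matrix.one_mul,
    ← Matrix.mul_assoc (diagonal _), diagonal_mul_diagonal]
  congr 3
  ext i
  simp [Real.mul_self_sqrt (hA.eigenvalues_nonneg i)]

end Sqrt

theorem mulVec_dotProduct_mulVec {m n R : Type*} [Fintype m] [Fintype n] [CommSemiring R]
    (A B : Matrix m n R) (x y : n → R) : (A *ᵥ x) ⬝ᵥ (B *ᵥ y) = x ⬝ᵥ ((Aᵀ * B) *ᵥ y) := by
  rw [← vecMul_transpose, ← dotProduct_mulVec, mulVec_mulVec]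

section RightAngle

variable {R : Type*} [CommRing R]

theorem transpose_mul_rot_mul (A : Matrix (Fin 2) (Fin 2) R) :
    Aᵀ * !![0, -1; 1, 0] * A = A.det • !![0, -1; 1, 0] := by
  rw [eta_fin_two A, det_fin_two_of]
  ext i j; fin_cases i <;> fin_cases j <;> simp [mul_apply, Fin.sum_univ_two] <;> ring

theorem dotProduct_rot_mulVec_self (v : Fin 2 → R) :
    v ⬝ᵥ (!![0, -1; 1, 0] *ᵥ v) = 0 := by
  simp [dotProduct, mulVec, Fin.sum_univ_two, mul_comm]

theorem rot_mul_rot : (!![0, -1; 1, 0] : Matrix (Fin 2) (Fin 2) R) * !![0, -1; 1, 0] = -1 := by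
  ext i j; fin_cases i <;> fin_cases j <;> simp

theorem transpose_rot_mul_rot :
    (!![0, -1; 1, 0] : Matrix (Fin 2) (Fin 2) R)ᵀ * !![0, -1; 1, 0] = 1 := by
  ext i j; fin_cases i <;> fin_cases j <;> simp [mul_apply, Fin.sum_univ_two]

theorem mul_rot_mul_of_transpose_eq_of_det_eq_one {G : Matrix (Fin 2) (Fin 2) R}
    (hGt : Gᵀ = G) (hdet : G.det = 1) : G * !![0, -1; 1, 0] * G = !![0, -1; 1, 0] := by
  simpa [hGt, hdet] using transpose_mul_rot_mul G

end RightAngle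

end Matrix

open Matrix in
theorem stmt3 (G : Matrix (Fin 2) (Fin 2) ℝ) (hG : G.PosDef) (hdet : G.det = 1)
    (F : Matrix (Fin 2) (Fin 2) ℝ) (hF : F = hG.posSemidef.sqrt)
    (v₁ v₂ : Fin 2 → ℝ)
    (hv : v₂ = (!![0, -1; 1, 0] : Matrix (Fin 2) (Fin 2) ℝ) *ᵥ (G *ᵥ v₁)) :
    (F *ᵥ v₁) ⬝ᵥ (F *ᵥ v₂) = 0 ∧
    (F *ᵥ v₁) ⬝ᵥ (F *ᵥ v₁) = (F *ᵥ v₂) ⬝ᵥ (F *ᵥ v₂) ∧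
    v₁ = -((!![0, -1; 1, 0] : Matrix (Fin 2) (Fin 2) ℝ) *ᵥ (G *ᵥ v₂)) := by
  have hGt : Gᵀ = G := by
    simpa [conjTranspose_eq_transpose_of_trivial] using hG.isHermitian.eq
  have hFF : Fᵀ * F = G := by
    rw [hF, PosSemidef.transpose_sqrt, PosSemidef.sqrt_mul_self]
  have pairing (a b : Fin 2 → ℝ) : (F *ᵥ a) ⬝ᵥ (F *ᵥ b) = a ⬝ᵥ (G *ᵥ b) := by
    rw [mulVec_dotProduct_mulVec, hFF]
  have hGv₂ : G *ᵥ v₂ = !![0, -1; 1, 0] *ᵥ v₁ := by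
    rw [hv, mulVec_mulVec, mulVec_mulVec,
      mul_rot_mul_of_transpose_eq_of_det_eq_one hGt hdet]
  refine ⟨?_, ?_, ?_⟩
  · rw [pairing, hGv₂, dotProduct_rot_mulVec_self]
  · rw [pairing, pairing, hGv₂, hv, mulVec_mulVec, mulVec_dotProduct_mulVec, transpose_mul,
      Matrix.mul_assoc, transpose_rot_mul_rot, Matrix.mul_one, hGt]
  · rw [hGv₂, mulVec_mulVec, rot_mul_rot, neg_mulVec, one_mulVec, neg_neg]
end

section
/- Let G be a real symmetric positive definite 2×2 matrix with det G = 1, J = ((0,-1),(1,0)), and suppose the 2×2 matrix Df with rows ∇f₁, ∇f₂ satisfies ∇f₂ = J G ∇f₁ with ∇f₁ ≠ 0. Then (det Df)⁻¹ · Df · G · Dfᵀ = I (the 2×2 identity matrix). -/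
/-!
Write `v = ∇f₁` and `J` for the rotation by a right angle, so that the rows of `Df` are `v` and
`JGv`, and `det Df = v ⬝ Gv`. The entries of `Df G Dfᵀ` are the `G`-products of these rows. For
every `A` one has `Aᵀ J A = (det A) J`, so `GJG = J` for symmetric `G` of determinant one; since
`x ⬝ Jx = 0` the off-diagonal entries vanish, and since `J` is orthogonal both diagonal entries
equal `v ⬝ Gv`. Positive definiteness of `G` makes this nonzero.
-/

open scoped Matrix

namespace Matrix

variable {R : Type*} [CommRing R]

local notation "J" => (!![0, -1; 1, 0] : Matrix (Fin 2) (Fin 2) R)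

theorem transpose_mul_J_mul_self (A : Matrix (Fin 2) (Fin 2) R) : Aᵀ * J * A = A.det • J := by
  ext i j
  fin_cases i <;> fin_cases j <;>
    simp [mul_apply, Fin.sum_univ_two, det_fin_two] <;> ring

theorem dotProduct_J_mulVec_self (x : Fin 2 → R) : x ⬝ᵥ (J *ᵥ x) = 0 := by
  simp [dotProduct, mulVec, Fin.sum_univ_two, mul_comm]

theorem J_mulVec_dotProduct_J_mulVec (x y : Fin 2 → R) : (J *ᵥ x) ⬝ᵥ (J *ᵥ y) = x ⬝ᵥ y := by
  simp [dotProduct, mulVec, Fin.sum_univ_two, add_comm]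

theorem det_eq_dotProduct_of_row_one_eq_J_mulVec {A : Matrix (Fin 2) (Fin 2) R}
    {u : Fin 2 → R} (h : A 1 = J *ᵥ u) : A.det = A 0 ⬝ᵥ u := by
  have h0 : A 1 0 = -u 1 := by simpa [mulVec, dotProduct] using congrFun h 0
  have h1 : A 1 1 = u 0 := by simpa [mulVec, dotProduct] using congrFun h 1
  rw [det_fin_two, h0, h1, dotProduct, Fin.sum_univ_two]
  ring

theorem mul_mul_transpose_apply {n : Type*} [Fintype n] (A G : Matrix n n R) (i j : n) :
    (A * G * Aᵀ) i j = A i ⬝ᵥ (G *ᵥ A j) := by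
  rw [Matrix.mul_assoc, mul_apply']
  rfl

theorem mul_mul_transpose_eq_smul_one {A G : Matrix (Fin 2) (Fin 2) R} (hG : G.IsSymm)
    (hdet : G.det = 1) (hrow : A 1 = J *ᵥ (G *ᵥ A 0)) :
    A * G * Aᵀ = (A 0 ⬝ᵥ (G *ᵥ A 0)) • 1 := by
  have hGJG : G * J * G = J := by
    simpa [hG.eq, hdet] using transpose_mul_J_mul_self G
  have hGJGv : G *ᵥ (J *ᵥ (G *ᵥ A 0)) = J *ᵥ A 0 := by
    rw [mulVec_mulVec, mulVec_mulVec, hGJG]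
  ext i j
  rw [mul_mul_transpose_apply]
  fin_cases i <;> fin_cases j <;> dsimp only [Fin.zero_eta, Fin.mk_one, Fin.isValue]
  · rw [smul_apply, one_apply_eq, smul_eq_mul, mul_one]
  · rw [smul_apply, one_apply_ne zero_ne_one, smul_zero, hrow, hGJGv, dotProduct_J_mulVec_self]
  · rw [smul_apply, one_apply_ne one_ne_zero, smul_zero, hrow, dotProduct_comm,
      dotProduct_J_mulVec_self]
  · rw [smul_apply, one_apply_eq, smul_eq_mul, mul_one, hrow, hGJGv, J_mulVec_dotProduct_J_mulVec,
      dotProduct_comm]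

end Matrix

theorem stmt5 (G : Matrix (Fin 2) (Fin 2) ℝ) (hG : G.PosDef) (hdet : G.det = 1)
    (Df : Matrix (Fin 2) (Fin 2) ℝ)
    (hrow : Df 1 = (!![0, -1; 1, 0] : Matrix (Fin 2) (Fin 2) ℝ) *ᵥ (G *ᵥ (Df 0)))
    (hne : Df 0 ≠ 0) :
    (Df.det)⁻¹ • (Df * G * Df.transpose) = (1 : Matrix (Fin 2) (Fin 2) ℝ) := by
  have hsymm : G.IsSymm := (Matrix.conjTranspose_eq_transpose_of_trivial G).symm.trans hG.1
  have hdetDf : Df.det = Df 0 ⬝ᵥ (G *ᵥ Df 0) :=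
    Matrix.det_eq_dotProduct_of_row_one_eq_J_mulVec hrow
  have hpos : 0 < Df.det := by simpa [hdetDf] using hG.dotProduct_mulVec_pos hne
  rw [Matrix.mul_mul_transpose_eq_smul_one hsymm hdet hrow, ← hdetDf, smul_smul,
    inv_mul_cancel₀ hpos.ne', one_smul]
end

section
/- Let f : ℂ → ℂ satisfy f(z + ζ) = c₁ f(z) + c₂ for all z ∈ ℂ, with ζ ≠ 0 and |f(z)| → ∞ as |z| → ∞. Then c₁ = 1, i.e. f(z + ζ) = f(z) + c₂ for all z. -/
/-!
If `c₁ ≠ 1`, then `g = f - w` with `w = c₂ / (1 - c₁)` the fixed point of `x ↦ c₁ x + c₂` satisfies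
`g (z + ζ) = c₁ g z`, hence `g (z + n ζ) = c₁ⁿ g z`. So `‖g‖` stays bounded by `‖g 0‖` along `n ζ`
when `‖c₁‖ ≤ 1` and along `-n ζ` when `‖c₁‖ > 1`, while `‖g‖ ≥ ‖f‖ - ‖w‖` tends to infinity.
-/

open Filter Bornology

theorem tendsto_nsmul_cobounded {E : Type*} [NormedAddCommGroup E] [NormedSpace ℝ E] {v : E}
    (hv : v ≠ 0) : Tendsto (fun n : ℕ => n • v) atTop (cobounded E) := by
  rw [← tendsto_norm_atTop_iff_cobounded]
  simp only [RCLike.norm_nsmul ℝ, nsmul_eq_mul]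
  exact tendsto_natCast_atTop_atTop.atTop_mul_const (norm_pos_iff.mpr hv)

theorem map_add_nsmul_eq_pow_mul {G M : Type*} [AddMonoid G] [Monoid M] {g : G → M} {ζ : G}
    {c : M} (hg : ∀ z, g (z + ζ) = c * g z) (n : ℕ) (z : G) : g (z + n • ζ) = c ^ n * g z := by
  induction n with
  | zero => simp
  | succ n ih => rw [succ_nsmul, ← add_assoc, hg, ih, pow_succ', mul_assoc]

theorem exists_forall_norm_map_nsmul_le {G K : Type*} [AddGroup G] [NormedDivisionRing K]
    {g : G → K} {ζ : G} {c : K} (hg : ∀ z, g (z + ζ) = c * g z) :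
    ∃ v ∈ ({ζ, -ζ} : Set G), ∀ n : ℕ, ‖g (n • v)‖ ≤ ‖g 0‖ := by
  rcases le_or_gt ‖c‖ 1 with hc | hc
  · refine ⟨ζ, by simp, fun n => ?_⟩
    calc ‖g (n • ζ)‖ = ‖c‖ ^ n * ‖g 0‖ := by
          rw [← zero_add (n • ζ), map_add_nsmul_eq_pow_mul hg, norm_mul, norm_pow]
      _ ≤ ‖g 0‖ := mul_le_of_le_one_left (norm_nonneg _) (pow_le_one₀ (norm_nonneg _) hc)
  · refine ⟨-ζ, by simp, fun n => ?_⟩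
    have horbit : g 0 = c ^ n * g (n • -ζ) := by
      rw [← map_add_nsmul_eq_pow_mul hg, neg_nsmul, neg_add_cancel]
    calc ‖g (n • -ζ)‖ ≤ ‖c‖ ^ n * ‖g (n • -ζ)‖ :=
          le_mul_of_one_le_left (norm_nonneg _) (one_le_pow₀ hc.le)
      _ = ‖g 0‖ := by rw [horbit, norm_mul, norm_pow]

theorem not_tendsto_norm_atTop_of_map_add_eq_mul {E K : Type*} [NormedAddCommGroup E]
    [NormedSpace ℝ E] [NormedDivisionRing K] {g : E → K} {ζ : E} (hζ : ζ ≠ 0) {c : K}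
    (hg : ∀ z, g (z + ζ) = c * g z) : ¬Tendsto (fun z => ‖g z‖) (cobounded E) atTop := by
  intro hinf
  obtain ⟨v, hv, hbdd⟩ := exists_forall_norm_map_nsmul_le hg
  have hv0 : v ≠ 0 := by rcases hv with rfl | rfl <;> simpa using hζ
  obtain ⟨n, hn⟩ := ((hinf.comp (tendsto_nsmul_cobounded hv0)).eventually_gt_atTop ‖g 0‖).exists
  exact (hbdd n).not_gt hn

theorem mul_add_sub_div_one_sub {K : Type*} [Field K] {c : K} (hc : c ≠ 1) (d x : K) :
    c * x + d - d / (1 - c) = c * (x - d / (1 - c)) := by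
  have h : 1 - c ≠ 0 := sub_ne_zero.mpr hc.symm
  field_simp
  ring

theorem stmt9 (f : ℂ → ℂ) (ζ c₁ c₂ : ℂ) (hζ : ζ ≠ 0)
    (hinf : Filter.Tendsto (fun z => ‖f z‖) (Bornology.cobounded ℂ) Filter.atTop)
    (hfe : ∀ z, f (z + ζ) = c₁ * f z + c₂) : c₁ = 1 := by
  by_contra hc
  set w := c₂ / (1 - c₁)
  refine not_tendsto_norm_atTop_of_map_add_eq_mul (g := (f · - w)) hζ
    (fun z => by rw [hfe]; exact mul_add_sub_div_one_sub hc c₂ (f z)) ?_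
  exact tendsto_atTop_mono (fun z => norm_sub_norm_le (f z) w)
    (tendsto_atTop_add_const_right _ _ hinf)
end

section
/- Let f : ℂ → ℂ satisfy f(z + 2π) = f(z) + 2π and f(z + 2πi) = f(z) + κ for all z ∈ ℂ, with |f(z)| → ∞ as |z| → ∞. Then Im κ ≠ 0. -/
/-!
Iterating the two relations gives `f (n • 2π + m • 2πi) = f 0 + n • 2π + m • κ` on the lattice.
If `κ` is real, then for each `m` a suitable `n` brings the real number `n • 2π + m • κ` into
`[-2π, 2π]`, so `f` stays bounded along lattice points of imaginary part `2πm`, which escape to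
infinity; this contradicts `‖f z‖ → ∞`.
-/

open Real Complex Filter Bornology AddConstMap

theorem map_zsmul_add_zsmul_of_map_add_const {G H : Type*} [AddCommGroup G] [AddGroup H]
    {f : G → H} {a c : G} {b d : H} (ha : ∀ x, f (x + a) = f x + b)
    (hc : ∀ x, f (x + c) = f x + d) (m n : ℤ) : f (m • a + n • c) = f 0 + n • d + m • b := by
  have hA := AddConstMapClass.map_add_zsmul (⟨f, ha⟩ : G →+c[a, b] H) (n • c) m
  have hC := AddConstMapClass.map_zsmul_const (⟨f, hc⟩ : G →+c[c, d] H) n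
  rw [add_comm]
  exact hA.trans (congrArg (· + m • b) hC)

theorem isBounded_setOf_le_of_tendsto_cobounded {α β : Type*} [Bornology α] [Preorder β]
    [NoMaxOrder β] {g : α → β} (hg : Tendsto g (cobounded α) atTop) (R : β) :
    IsBounded {x | g x ≤ R} := by
  filter_upwards [hg.eventually_gt_atTop R] with x hx using not_le_of_gt hx

theorem exists_im_eq_norm_map_le {f : ℂ → ℂ} {p c : ℝ} (hp : 0 < p)
    (h1 : ∀ z, f (z + p) = f z + p) (h2 : ∀ z, f (z + p * I) = f z + c) (m : ℤ) :
    ∃ z : ℂ, z.im = p * m ∧ ‖f z‖ ≤ ‖f 0‖ + p := by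
  obtain ⟨n, ⟨hn₀, hn⟩, -⟩ := existsUnique_sub_zsmul_mem_Ico hp (m * c) 0
  refine ⟨(-n) • (p : ℂ) + m • (p * I), by simp [mul_comm], ?_⟩
  have hval : f ((-n) • (p : ℂ) + m • (p * I)) = f 0 + ((m * c - n • p : ℝ) : ℂ) := by
    rw [map_zsmul_add_zsmul_of_map_add_const h1 h2]
    simp only [zsmul_eq_mul]
    push_cast
    ring
  calc ‖f _‖ ≤ ‖f 0‖ + |m * c - n • p| := by
        rw [hval, ← Real.norm_eq_abs, ← norm_real]
        exact norm_add_le _ _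
    _ ≤ ‖f 0‖ + p := by
        gcongr
        rw [abs_le]
        constructor <;> linarith

theorem stmt10 (f : ℂ → ℂ) (κ : ℂ)
    (h1 : ∀ z, f (z + 2 * Real.pi) = f z + 2 * Real.pi)
    (h2 : ∀ z, f (z + 2 * Real.pi * Complex.I) = f z + κ)
    (hinf : Filter.Tendsto (fun z => ‖f z‖) (Bornology.cobounded ℂ) Filter.atTop) :
    κ.im ≠ 0 := by
  intro hκ
  obtain ⟨R, hR⟩ := isBounded_iff_forall_norm_le.1 <|
    isBounded_setOf_le_of_tendsto_cobounded hinf (‖f 0‖ + 2 * π)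
  obtain ⟨m, hm⟩ := exists_nat_gt (R / (2 * π))
  rw [show κ = κ.re from Complex.ext rfl (by simpa)] at h2
  obtain ⟨z, hz_im, hz⟩ := exists_im_eq_norm_map_le two_pi_pos (by exact_mod_cast h1) (by exact_mod_cast h2) m
  have : 2 * π * m ≤ R := calc
    2 * π * m = z.im := by rw [hz_im]; norm_cast
    _ ≤ ‖z‖ := im_le_norm z
    _ ≤ R := hR z hz
  rw [div_lt_iff₀' two_pi_pos] at hm
  linarith
end

section
/- Let Jac = ((∂₁f₁, ∂₂f₁),(∂₁f₂, ∂₂f₂)) be the Jacobian matrix at a point of a map f = (f₁,f₂) satisfying ∇f₂ = J G ∇f₁ with G real symmetric positive definite, det G = 1, c|ξ|² ≤ ⟨Gξ,ξ⟩ ≤ C|ξ|² for all ξ, and ∇f₁ ≠ 0. Then the operator norm satisfies |Jac|² ≤ K · det(Jac) with a constant K depending only on c and C (K-quasi-conformality). -/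
open scoped Matrix

set_option maxHeartbeats 1000000 in

theorem stmt19 (c C : ℝ) (hc : 0 < c) (hcC : c ≤ C) :
    ∃ K : ℝ, 0 < K ∧ ∀ (G Df : Matrix (Fin 2) (Fin 2) ℝ),
      G.IsSymm → G.det = 1 →
      (∀ ξ : Fin 2 → ℝ, c * (ξ ⬝ᵥ ξ) ≤ (G *ᵥ ξ) ⬝ᵥ ξ ∧ (G *ᵥ ξ) ⬝ᵥ ξ ≤ C * (ξ ⬝ᵥ ξ)) →
      Df 1 = (!![0, -1; 1, 0] : Matrix (Fin 2) (Fin 2) ℝ) *ᵥ (G *ᵥ Df 0) →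
      Df 0 ≠ 0 →
      (∑ i, ∑ j, (Df i j) ^ 2) ≤ K * Df.det := by
  have hC : 0 < C := lt_of_lt_of_le hc hcC
  refine ⟨1/c + C, by positivity, ?_⟩
  intro G Df hsym hdet hG hJ hv
  obtain ⟨a, ha⟩ : ∃ x : ℝ, x = G 0 0 := ⟨_, rfl⟩
  obtain ⟨d, hd⟩ : ∃ x : ℝ, x = G 1 1 := ⟨_, rfl⟩
  obtain ⟨b, hbdef⟩ : ∃ x : ℝ, x = G 0 1 := ⟨_, rfl⟩
  have hb : G 1 0 = b := by rw [hbdef]; exact (hsym.apply 1 0).symm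
  have hdet' : a * d - b ^ 2 = 1 := by
    have h := hdet
    rw [Matrix.det_fin_two] at h
    rw [← ha, ← hd, hb, ← hbdef] at h
    nlinarith [h]
  have hup : ∀ x y : ℝ, a*x^2 + 2*b*x*y + d*y^2 ≤ C*(x^2+y^2) := by
    intro x y
    have h := (hG ![x,y]).2
    simp [Matrix.mulVec, dotProduct, Fin.sum_univ_two, hb] at h
    rw [← ha, ← hd, ← hbdef] at h
    nlinarith [h]
  have hlo : ∀ x y : ℝ, c*(x^2+y^2) ≤ a*x^2 + 2*b*x*y + d*y^2 := by
    intro x y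
    have h := (hG ![x,y]).1
    simp [Matrix.mulVec, dotProduct, Fin.sum_univ_two, hb] at h
    rw [← ha, ← hd, ← hbdef] at h
    nlinarith [h]
  have hkey : b^2 ≤ (C - a) * (C - d) := by
    have hq : ∀ t : ℝ, 0 ≤ (C - a) * (t * t) + (-(2*b)) * t + (C - d) := by
      intro t
      nlinarith [hup t 1]
    have hdisc := discrim_le_zero hq
    rw [discrim] at hdisc
    nlinarith [hdisc]
  have htr : C * (a + d) ≤ C^2 + 1 := by nlinarith [hkey, hdet']
  obtain ⟨v0, hv0⟩ : ∃ x : ℝ, x = Df 0 0 := ⟨_, rfl⟩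
  obtain ⟨v1, hv1⟩ : ∃ x : ℝ, x = Df 0 1 := ⟨_, rfl⟩
  have h10 : Df 1 0 = -(b * v0 + d * v1) := by
    have h := congrFun hJ 0
    simp [Matrix.mulVec, dotProduct, Fin.sum_univ_two, hb] at h
    rw [h, ← hd, ← hv0, ← hv1]; ring
  have h11 : Df 1 1 = a * v0 + b * v1 := by
    have h := congrFun hJ 1
    simp [Matrix.mulVec, dotProduct, Fin.sum_univ_two, hb] at h
    rw [h, ← ha, ← hbdef, ← hv0, ← hv1]
  have hNpos : 0 < v0^2 + v1^2 := by
    have hne : v0 ≠ 0 ∨ v1 ≠ 0 := by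
      by_contra h
      push_neg at h
      apply hv
      funext i
      fin_cases i
      · simpa [← hv0] using h.1
      · simpa [← hv1] using h.2
    rcases hne with h | h
    · have := abs_pos.mpr h
      nlinarith [sq_nonneg v1, sq_abs v0]
    · have := abs_pos.mpr h
      nlinarith [sq_nonneg v0, sq_abs v1]
  have hDlo : c * (v0^2 + v1^2) ≤ a*v0^2 + 2*b*v0*v1 + d*v1^2 := hlo v0 v1
  have hDup : a*v0^2 + 2*b*v0*v1 + d*v1^2 ≤ C * (v0^2 + v1^2) := hup v0 v1
  have hDpos : 0 < a*v0^2 + 2*b*v0*v1 + d*v1^2 := lt_of_lt_of_le (by positivity) hDlo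
  -- |Gv|^2 <= C * <Gv,v>
  have hB : (a*v0+b*v1)^2 + (b*v0+d*v1)^2 ≤ C * (a*v0^2 + 2*b*v0*v1 + d*v1^2) := by
    have p1 : 0 ≤ (C^2 + 1 - C*(a+d)) * ((a*v0^2 + 2*b*v0*v1 + d*v1^2) * (v0^2+v1^2)) :=
      mul_nonneg (by linarith) (mul_nonneg hDpos.le hNpos.le)
    have p2 : 0 ≤ (C*(v0^2+v1^2) - (a*v0^2 + 2*b*v0*v1 + d*v1^2)) * (v0^2+v1^2) :=
      mul_nonneg (by linarith) hNpos.le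
    have E : C * (((a*v0+b*v1)^2 + (b*v0+d*v1)^2) * (v0^2+v1^2))
        = C * (a*v0^2 + 2*b*v0*v1 + d*v1^2) * ((a+d) * (v0^2+v1^2))
          - C * (v0^2+v1^2)^2 := by
      linear_combination (-(C*(v0^2+v1^2)^2)) * hdet'
    have hfin : (C * (v0^2+v1^2)) * ((a*v0+b*v1)^2 + (b*v0+d*v1)^2)
        ≤ (C * (v0^2+v1^2)) * (C * (a*v0^2 + 2*b*v0*v1 + d*v1^2)) := by
      linarith [E, p1, p2]
    exact le_of_mul_le_mul_left hfin (by positivity)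
  have hA : v0^2 + v1^2 ≤ (a*v0^2 + 2*b*v0*v1 + d*v1^2) / c := (le_div_iff₀ hc).mpr (by linarith)
  have hdetDf : Df.det = a*v0^2 + 2*b*v0*v1 + d*v1^2 := by
    rw [Matrix.det_fin_two, h10, h11, ← hv0, ← hv1]; ring
  have hsumeq : (∑ i, ∑ j, (Df i j) ^ 2)
      = (v0^2 + v1^2) + ((a*v0+b*v1)^2 + (b*v0+d*v1)^2) := by
    simp only [Fin.sum_univ_two]
    rw [h10, h11, ← hv0, ← hv1]; ring
  rw [hdetDf, hsumeq]
  have hKeq : (1/c + C) * (a*v0^2 + 2*b*v0*v1 + d*v1^2)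
      = (a*v0^2 + 2*b*v0*v1 + d*v1^2)/c + C*(a*v0^2 + 2*b*v0*v1 + d*v1^2) := by ring
  rw [hKeq]
  linarith
end
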